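/- Poisson analogue for a periodic weight (Theorem 2(I)): Let k ≥ 1 be an integer, let χ : ℤ → ℂ satisfy χ(n + k) = χ(n) for all n, let a < b be real numbers with a, b ∉ ℤ, and let f : ℝ → ℂ be continuously differentiable on [a,b]. Then the symmetric partial sums (1/k) Σ_{|n| ≤ N} τ(χ,n) ∫_a^b f(u) e^{−2πinu/k} du converge as N → ∞ to Σ_{a < n ≤ b} χ(n) f(n); that is, Σ_{a < n ≤ b} χ(n) f(n) = (1/k) Σ_{n=−∞}^{∞} τ(χ,n) ∫_a^b f(u) e^{−2πinu/k} du. -/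

import Mathlib

open MeasureTheory intervalIntegral Filter

/-- `e(z) = exp(2πiz)`. -/
noncomputable def ee (z : ℂ) : ℂ := Complex.exp (2 * (Real.pi : ℂ) * Complex.I * z)

/-- Gauss-type sum `τ(χ, n) = ∑_{l=1}^{k} χ(l) e^{2πinl/k}`. -/
noncomputable def tauSum (k : ℕ) (χ : ℤ → ℂ) (n : ℤ) : ℂ :=
  ∑ l ∈ Finset.Icc (1 : ℤ) (k : ℤ), χ l * ee ((n : ℂ) * (l : ℂ) / (k : ℂ))

open FourierTransform Real Set Topology

lemma ee_add (x y : ℂ) : ee (x + y) = ee x * ee y := by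
  simp [ee, mul_add, Complex.exp_add]

lemma ee_zero : ee 0 = 1 := by simp [ee]

lemma ee_int (n : ℤ) : ee (n : ℂ) = 1 := by
  rw [ee, mul_comm]
  simpa [mul_assoc] using Complex.exp_int_mul_two_pi_mul_I n

lemma ee_eq_one {t : ℝ} (h : ee (t : ℂ) = 1) : ∃ n : ℤ, t = n := by
  rw [ee, Complex.exp_eq_one_iff] at h
  obtain ⟨n, hn⟩ := h
  refine ⟨n, ?_⟩
  have h2 : (2 * (Real.pi : ℂ) * Complex.I) ≠ 0 := by
    exact mul_ne_zero (mul_ne_zero two_ne_zero (Complex.ofReal_ne_zero.2 Real.pi_ne_zero)) Complex.I_ne_zero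
  have : (t : ℂ) = (n : ℂ) := mul_left_cancel₀ h2 (by linear_combination hn)
  exact_mod_cast this

lemma ee_cont (c : ℂ) : Continuous fun t : ℝ => ee (c * (t : ℂ)) := by
  exact Complex.continuous_exp.comp (by continuity)

lemma ee_smul (x : ℝ) (z : ℂ) : (𝐞 (-x)) • z = z * ee (-(x : ℂ)) := by
  have h : (((2 * Real.pi * (-x) : ℝ)) : ℂ) * Complex.I = 2 * (Real.pi : ℂ) * Complex.I * (-(x : ℂ)) := by
    push_cast; ring
  rw [Circle.smul_def, Real.fourierChar_apply, ee, h, mul_comm]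
  rw [smul_eq_mul, mul_comm]

lemma ee_cont_neg : Continuous fun t : ℝ => ee (-(t : ℂ)) := by
  simpa [neg_one_mul] using ee_cont (-1)

lemma rl (α β : ℝ) (h : ℝ → ℂ) :
    Tendsto (fun w : ℝ => ∫ t in α..β, h t * ee (-(w : ℂ) * t)) (cocompact ℝ) (𝓝 0) := by
  set H := Set.indicator (Set.uIoc α β) h with hH
  have pt : ∀ w t : ℝ, 𝐞 (-(t * w)) • H t
      = Set.indicator (Set.uIoc α β) (fun t => h t * ee (-(w : ℂ) * t)) t := by
    intro w t
    rw [ee_smul]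
    by_cases ht : t ∈ Set.uIoc α β
    · simp only [hH, Set.indicator_of_mem ht]
      congr 2
      push_cast
      ring
    · simp [hH, Set.indicator_of_notMem ht]
  have main : Tendsto (fun w : ℝ => ∫ t in Set.uIoc α β, h t * ee (-(w : ℂ) * t))
      (cocompact ℝ) (𝓝 0) := by
    have h0 := Real.tendsto_integral_exp_smul_cocompact H
    refine h0.congr fun w => ?_
    rw [← MeasureTheory.integral_indicator measurableSet_uIoc]
    exact integral_congr_ae (.of_forall fun t => pt w t)
  rcases le_or_gt α β with hle | hlt
  · refine main.congr fun w => ?_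
    rw [Set.uIoc_of_le hle, intervalIntegral.integral_of_le hle]
  · have := main.neg
    rw [neg_zero] at this
    refine this.congr fun w => ?_
    rw [Set.uIoc_of_ge hlt.le, intervalIntegral.integral_symm,
      intervalIntegral.integral_of_le hlt.le]

lemma rl_seq (α β : ℝ) (h : ℝ → ℂ) (u : ℕ → ℤ)
    (hu : Tendsto (fun N => ((u N : ℤ) : ℝ)) atTop (cocompact ℝ)) :
    Tendsto (fun N : ℕ => ∫ t in α..β, h t * ee (-(u N : ℂ) * t)) atTop (𝓝 0) := by
  have := (rl α β h).comp hu
  refine this.congr fun N => ?_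
  simp only [Function.comp]
  norm_cast

lemma tendsto_coe_succ : Tendsto (fun N : ℕ => ((((N : ℤ) + 1) : ℤ) : ℝ)) atTop (cocompact ℝ) := by
  rw [cocompact_eq_atBot_atTop]
  refine Tendsto.mono_right ?_ le_sup_right
  have : Tendsto (fun N : ℕ => (N : ℝ) + 1) atTop atTop :=
    (tendsto_natCast_atTop_atTop).atTop_add tendsto_const_nhds
  refine this.congr fun N => by push_cast; ring
lemma tendsto_coe_neg : Tendsto (fun N : ℕ => (((-(N : ℤ)) : ℤ) : ℝ)) atTop (cocompact ℝ) := by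
  rw [cocompact_eq_atBot_atTop]
  refine Tendsto.mono_right ?_ le_sup_left
  have : Tendsto (fun N : ℕ => -(N : ℝ)) atTop atBot := tendsto_neg_atBot_iff.2 tendsto_natCast_atTop_atTop
  refine this.congr fun N => by push_cast; ring

lemma telescope (c : ℤ → ℂ) (N : ℕ) :
    ∑ n ∈ Finset.Icc (-(N : ℤ)) (N : ℤ), (c (n + 1) - c n) = c ((N : ℤ) + 1) - c (-(N : ℤ)) := by
  induction N with
  | zero => simp
  | succ N ih =>
    have e1 : (-((N + 1 : ℕ) : ℤ)) = -((N : ℤ) + 1) := by push_cast; ring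
    have e2 : ((N + 1 : ℕ) : ℤ) = (N : ℤ) + 1 := by push_cast; ring
    have h1 : Finset.Icc (-((N : ℤ) + 1)) ((N : ℤ) + 1)
        = insert (-((N : ℤ) + 1)) (insert ((N : ℤ) + 1) (Finset.Icc (-(N : ℤ)) (N : ℤ))) := by
      ext n
      simp only [Finset.mem_Icc, Finset.mem_insert]
      omega
    rw [e1, e2, h1, Finset.sum_insert (by simp only [Finset.mem_insert, Finset.mem_Icc]; omega),
      Finset.sum_insert (by simp only [Finset.mem_Icc]; omega), ih]
    have h2 : -((N : ℤ) + 1) + 1 = -(N : ℤ) := by ring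
    rw [h2]
    ring

lemma zero_int (α β : ℝ) (g : ℝ → ℂ) (hg : ContinuousOn g (Set.uIcc α β))
    (hne : ∀ t ∈ Set.uIcc α β, ee (-(t : ℂ)) ≠ 1) :
    Tendsto (fun N : ℕ => ∑ n ∈ Finset.Icc (-(N : ℤ)) (N : ℤ),
      ∫ t in α..β, g t * ee (-(n : ℂ) * t)) atTop (𝓝 0) := by
  set h : ℝ → ℂ := fun t => g t / (ee (-(t : ℂ)) - 1) with hh
  have hsub : ContinuousOn (fun t : ℝ => ee (-(t : ℂ)) - 1) (Set.uIcc α β) :=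
    (ee_cont_neg.sub continuous_const).continuousOn
  have hhc : ContinuousOn h (Set.uIcc α β) :=
    hg.div hsub fun t ht => sub_ne_zero.2 (hne t ht)
  have hint : ∀ m : ℤ, IntervalIntegrable (fun t => h t * ee (-(m : ℂ) * t)) volume α β :=
    fun m => (hhc.mul (ee_cont (-(m : ℂ))).continuousOn).intervalIntegrable
  set c : ℤ → ℂ := fun m => ∫ t in α..β, h t * ee (-(m : ℂ) * t) with hc
  have key : ∀ n : ℤ, (∫ t in α..β, g t * ee (-(n : ℂ) * t)) = c (n + 1) - c n := by
    intro n
    rw [hc]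
    simp only
    rw [← intervalIntegral.integral_sub (by exact_mod_cast hint (n + 1)) (hint n)]
    apply intervalIntegral.integral_congr
    intro t ht
    have hz := sub_ne_zero.2 (hne t ht)
    have e1 : ee (-((n + 1 : ℤ) : ℂ) * t) = ee (-(t : ℂ)) * ee (-(n : ℂ) * t) := by
      rw [← ee_add]
      congr 1
      push_cast
      ring
    simp only [hh, e1]
    field_simp
  have lim1 : Tendsto (fun N : ℕ => c ((N : ℤ) + 1)) atTop (𝓝 0) := by
    have := rl_seq α β h (fun N => (N : ℤ) + 1) tendsto_coe_succ
    exact this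
  have lim2 : Tendsto (fun N : ℕ => c (-(N : ℤ))) atTop (𝓝 0) := by
    have := rl_seq α β h (fun N => -(N : ℤ)) tendsto_coe_neg
    exact this
  have := lim1.sub lim2
  rw [sub_zero] at this
  refine this.congr fun N => ?_
  rw [← telescope c N]
  exact (Finset.sum_congr rfl fun n _ => key n).symm

lemma ee_ne_one {t : ℝ} (h : ∀ j : ℤ, t ≠ j) : ee (-(t : ℂ)) ≠ 1 := by
  intro hc
  have h2 : ee (((-t : ℝ) : ℂ)) = 1 := by push_cast; exact hc
  obtain ⟨j, hj⟩ := ee_eq_one h2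
  exact h (-j) (by push_cast; linarith [hj])

lemma hasDerivAt_phi (t₀ : ℝ) :
    HasDerivAt (fun t : ℝ => ee (-(t : ℂ))) (-(2 * (Real.pi : ℂ) * Complex.I) * ee (-(t₀ : ℂ))) t₀ := by
  set c : ℂ := -(2 * (Real.pi : ℂ) * Complex.I) with hc
  have h1 : ∀ z : ℂ, ee (-z) = Complex.exp (c * z) := by
    intro z; rw [ee, hc]; congr 1; ring
  have h2 : HasDerivAt (fun z : ℂ => Complex.exp (c * z)) (c * Complex.exp (c * (t₀ : ℂ))) (t₀ : ℂ) := by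
    have := ((Complex.hasDerivAt_exp (c * (t₀ : ℂ))).comp (t₀ : ℂ)
      ((hasDerivAt_id ((t₀ : ℝ) : ℂ)).const_mul c))
    have he : (Complex.exp ∘ fun z => c * z) = fun z : ℂ => Complex.exp (c * z) := rfl
    rw [he] at this
    rw [show c * Complex.exp (c * (t₀ : ℂ)) = Complex.exp (c * (t₀ : ℂ)) * (c * 1) by ring]
    exact this
  have h3 := h2.comp_ofReal
  simp only [← h1] at h3
  simpa [h1, mul_comm] using h3

lemma ee_ne_one_of_Ioo {t : ℝ} (m : ℤ) (h1 : (m : ℝ) < t) (h2 : t < (m : ℝ) + 1) :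
    ee (-(t : ℂ)) ≠ 1 := by
  refine ee_ne_one fun j hj => ?_
  rw [hj] at h1 h2
  have b1 : m < j := by exact_mod_cast h1
  have b2 : j < m + 1 := by exact_mod_cast (by push_cast; linarith : (j : ℝ) < ((m + 1 : ℤ) : ℝ))
  omega

lemma ee_neg_intR (m : ℤ) : ee (-((m : ℝ) : ℂ)) = 1 := by
  have := ee_int (-m)
  push_cast at this ⊢
  exact this

lemma one_int (α β : ℝ) (m : ℤ) (hα1 : (m : ℝ) - 1 < α) (hα2 : α < m) (hβ1 : (m : ℝ) < β)
    (hβ2 : β < (m : ℝ) + 1) (g : ℝ → ℂ) (hg : ContDiffOn ℝ 1 g (Set.Icc α β)) :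
    Tendsto (fun N : ℕ => ∑ n ∈ Finset.Icc (-(N : ℤ)) (N : ℤ),
      ∫ t in α..β, g t * ee (-(n : ℂ) * t)) atTop (𝓝 (g m)) := by
  have hαβ : α < β := lt_trans hα2 hβ1
  set φ : ℝ → ℂ := fun t => ee (-(t : ℂ)) with hφ
  have hφc : Continuous φ := ee_cont_neg
  have hφm : φ (m : ℝ) = 1 := ee_neg_intR m
  have hne' : ∀ t ∈ Set.Icc α β, t ≠ (m : ℝ) → φ t ≠ 1 := by
    intro t ht htm
    refine ee_ne_one fun j hj => ?_
    have h1 : (m : ℝ) - 1 < (j : ℝ) := by rw [← hj]; exact lt_of_lt_of_le hα1 ht.1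
    have h2 : (j : ℝ) < (m : ℝ) + 1 := by rw [← hj]; exact lt_of_le_of_lt ht.2 hβ2
    have : j = m := by
      have b1 : m - 1 < j := by exact_mod_cast (by push_cast; linarith : ((m - 1 : ℤ) : ℝ) < (j : ℝ))
      have b2 : j < m + 1 := by exact_mod_cast (by push_cast; linarith : ((j : ℤ) : ℝ) < ((m + 1 : ℤ) : ℝ))
      omega
    exact htm (by rw [hj, this])
  have hIccnhds : Set.Icc α β ∈ 𝓝 ((m : ℝ)) := Icc_mem_nhds hα2 hβ1
  have hgdiff : DifferentiableAt ℝ g (m : ℝ) := (hg.contDiffAt hIccnhds).differentiableAt one_ne_zero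
  set dsg := dslope g (m : ℝ) with hdsg
  set dsφ := dslope φ (m : ℝ) with hdsφ
  have hdsg_cont : ContinuousOn dsg (Set.Icc α β) :=
    (continuousOn_dslope hIccnhds).2 ⟨hg.continuousOn, hgdiff⟩
  have hdsφ_cont : Continuous dsφ := by
    rw [continuous_iff_continuousAt]
    intro t
    by_cases ht : t = (m : ℝ)
    · subst ht
      exact continuousAt_dslope_same.2 (hasDerivAt_phi _).differentiableAt
    · exact (continuousAt_dslope_of_ne ht).2 hφc.continuousAt
  have h2pi : (-(2 * (Real.pi : ℂ) * Complex.I)) ≠ 0 := by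
    refine neg_ne_zero.2 (mul_ne_zero (mul_ne_zero two_ne_zero ?_) Complex.I_ne_zero)
    exact Complex.ofReal_ne_zero.2 Real.pi_ne_zero
  have hdsφ_ne : ∀ t ∈ Set.Icc α β, dsφ t ≠ 0 := by
    intro t ht
    by_cases htm : t = (m : ℝ)
    · subst htm
      rw [hdsφ, dslope_same, (hasDerivAt_phi _).deriv, ee_neg_intR m, mul_one]
      exact h2pi
    · rw [hdsφ, dslope_of_ne _ htm, slope_def_module]
      refine smul_ne_zero (inv_ne_zero (sub_ne_zero.2 htm)) ?_
      rw [hφm]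
      exact sub_ne_zero.2 (hne' t ht htm)
  set h : ℝ → ℂ := fun t => dsg t / dsφ t with hh
  have hhc : ContinuousOn h (Set.Icc α β) :=
    hdsg_cont.div hdsφ_cont.continuousOn hdsφ_ne
  have hid : ∀ t ∈ Set.Icc α β, g t - g (m : ℝ) = h t * (φ t - 1) := by
    intro t ht
    have e1 : ((t : ℝ) - (m : ℝ)) • dsg t = g t - g (m : ℝ) := sub_smul_dslope g (m : ℝ) t
    have e2 : ((t : ℝ) - (m : ℝ)) • dsφ t = φ t - φ (m : ℝ) := sub_smul_dslope φ (m : ℝ) t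
    rw [hφm] at e2
    rw [hh]
    simp only
    rw [← e1, ← e2]
    rw [Complex.real_smul, Complex.real_smul]
    field_simp [hdsφ_ne t ht]
  -- integrability facts
  have hgint : ∀ n : ℤ, IntervalIntegrable (fun t => g t * ee (-(n : ℂ) * t)) volume α β := by
    intro n
    refine ContinuousOn.intervalIntegrable ?_
    rw [Set.uIcc_of_le hαβ.le]
    exact hg.continuousOn.mul (ee_cont (-(n : ℂ))).continuousOn
  have hKint : ∀ (n : ℤ) (x y : ℝ), IntervalIntegrable (fun t : ℝ => ee (-(n : ℂ) * t)) volume x y :=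
    fun n x y => (ee_cont (-(n : ℂ))).intervalIntegrable x y
  have hhint : ∀ n : ℤ, IntervalIntegrable (fun t => h t * ee (-(n : ℂ) * t)) volume α β := by
    intro n
    refine ContinuousOn.intervalIntegrable ?_
    rw [Set.uIcc_of_le hαβ.le]
    exact hhc.mul (ee_cont (-(n : ℂ))).continuousOn
  set c : ℤ → ℂ := fun n => ∫ t in α..β, h t * ee (-(n : ℂ) * t) with hcdef
  set K : ℤ → ℂ := fun n => ∫ t in α..β, ee (-(n : ℂ) * t) with hKdef
  have key : ∀ n : ℤ, (∫ t in α..β, g t * ee (-(n : ℂ) * t))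
      = g (m : ℝ) * K n + (c (n + 1) - c n) := by
    intro n
    have e0 : (∫ t in α..β, g t * ee (-(n : ℂ) * t))
        = ∫ t in α..β, (g (m : ℝ) * ee (-(n : ℂ) * t)
          + (h t * ee (-((n + 1 : ℤ) : ℂ) * t) - h t * ee (-(n : ℂ) * t))) := by
      apply intervalIntegral.integral_congr
      intro t ht
      rw [Set.uIcc_of_le hαβ.le] at ht
      have e1 : ee (-((n + 1 : ℤ) : ℂ) * t) = φ t * ee (-(n : ℂ) * t) := by
        rw [hφ]
        simp only
        rw [← ee_add]
        congr 1
        push_cast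
        ring
      have e2 := hid t ht
      simp only [e1]
      linear_combination ee (-(n : ℂ) * t) * e2
    rw [e0, intervalIntegral.integral_add ((hKint n α β).const_mul _)
      ((hhint (n + 1)).sub (hhint n)), intervalIntegral.integral_sub (hhint (n + 1)) (hhint n),
      intervalIntegral.integral_const_mul]
  -- the kernel sum tends to 1
  have hmhalf1 : (m : ℝ) - 1 < (m : ℝ) - 1 / 2 := by linarith
  have hmhalf2 : (m : ℝ) - 1 / 2 < (m : ℝ) := by linarith
  have hmhalf3 : (m : ℝ) < (m : ℝ) + 1 / 2 := by linarith
  have hmhalf4 : (m : ℝ) + 1 / 2 < (m : ℝ) + 1 := by linarith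
  have Ksplit : ∀ n : ℤ, K n = (∫ t in α..((m : ℝ) - 1 / 2), ee (-(n : ℂ) * t))
      + (∫ t in ((m : ℝ) - 1 / 2)..((m : ℝ) + 1 / 2), ee (-(n : ℂ) * t))
      + ∫ t in ((m : ℝ) + 1 / 2)..β, ee (-(n : ℂ) * t) := by
    intro n
    rw [hKdef]
    simp only
    rw [intervalIntegral.integral_add_adjacent_intervals (hKint n _ _) (hKint n _ _),
      intervalIntegral.integral_add_adjacent_intervals (hKint n _ _) (hKint n _ _)]
  have Kmid : ∀ n : ℤ, (∫ t in ((m : ℝ) - 1 / 2)..((m : ℝ) + 1 / 2), ee (-(n : ℂ) * t))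
      = if n = 0 then 1 else 0 := by
    intro n
    by_cases hn : n = 0
    · subst hn
      simp only [if_true]
      have : ∀ t : ℝ, ee (-((0 : ℤ) : ℂ) * t) = 1 := by
        intro t; push_cast; rw [neg_zero, zero_mul, ee_zero]
      rw [intervalIntegral.integral_congr fun t _ => this t, intervalIntegral.integral_const]
      have e5 : ((m : ℝ) + 1 / 2 - ((m : ℝ) - 1 / 2)) = 1 := by ring
      rw [e5, one_smul]
    · rw [if_neg hn]
      set cc : ℂ := 2 * (Real.pi : ℂ) * Complex.I * (-(n : ℂ)) with hcc
      have hccne : cc ≠ 0 := by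
        rw [hcc]
        refine mul_ne_zero (mul_ne_zero (mul_ne_zero two_ne_zero
          (Complex.ofReal_ne_zero.2 Real.pi_ne_zero)) Complex.I_ne_zero) ?_
        simpa using fun hc => hn (by exact_mod_cast hc)
      have e3 : ∀ t : ℝ, ee (-(n : ℂ) * t) = Complex.exp (cc * t) := by
        intro t; rw [ee, hcc]; congr 1; ring
      rw [intervalIntegral.integral_congr fun t _ => e3 t, integral_exp_mul_complex hccne]
      have e4 : Complex.exp (cc * ((((m : ℝ) + 1 / 2 : ℝ)) : ℂ))
          = Complex.exp (cc * ((((m : ℝ) - 1 / 2 : ℝ)) : ℂ)) := by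
        rw [Complex.exp_eq_exp_iff_exists_int]
        refine ⟨-n, by rw [hcc]; push_cast; ring⟩
      rw [e4, sub_self, zero_div]
  have Kleft : Tendsto (fun N : ℕ => ∑ n ∈ Finset.Icc (-(N : ℤ)) (N : ℤ),
      ∫ t in α..((m : ℝ) - 1 / 2), ee (-(n : ℂ) * t)) atTop (𝓝 0) := by
    have := zero_int α ((m : ℝ) - 1 / 2) (fun _ => 1) continuousOn_const ?_
    · refine this.congr fun N => Finset.sum_congr rfl fun n _ => ?_
      exact intervalIntegral.integral_congr fun t _ => by rw [one_mul]
    · intro t ht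
      have hb1 : ((m - 1 : ℤ) : ℝ) < t := by
        rcases Set.mem_uIcc.1 ht with ⟨h1, _⟩ | ⟨h1, _⟩ <;> push_cast <;> linarith
      have hb2 : t < ((m - 1 : ℤ) : ℝ) + 1 := by
        rcases Set.mem_uIcc.1 ht with ⟨_, h2⟩ | ⟨_, h2⟩ <;> push_cast <;> linarith
      exact ee_ne_one_of_Ioo (m - 1) hb1 hb2
  have Kright : Tendsto (fun N : ℕ => ∑ n ∈ Finset.Icc (-(N : ℤ)) (N : ℤ),
      ∫ t in ((m : ℝ) + 1 / 2)..β, ee (-(n : ℂ) * t)) atTop (𝓝 0) := by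
    have := zero_int ((m : ℝ) + 1 / 2) β (fun _ => 1) continuousOn_const ?_
    · refine this.congr fun N => Finset.sum_congr rfl fun n _ => ?_
      exact intervalIntegral.integral_congr fun t _ => by rw [one_mul]
    · intro t ht
      have hb1 : ((m : ℤ) : ℝ) < t := by
        rcases Set.mem_uIcc.1 ht with ⟨h1, _⟩ | ⟨h1, _⟩ <;> push_cast <;> linarith
      have hb2 : t < ((m : ℤ) : ℝ) + 1 := by
        rcases Set.mem_uIcc.1 ht with ⟨_, h2⟩ | ⟨_, h2⟩ <;> push_cast <;> linarith
      exact ee_ne_one_of_Ioo m hb1 hb2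
  have Kmidsum : ∀ N : ℕ, ∑ n ∈ Finset.Icc (-(N : ℤ)) (N : ℤ),
      (∫ t in ((m : ℝ) - 1 / 2)..((m : ℝ) + 1 / 2), ee (-(n : ℂ) * t)) = 1 := by
    intro N
    rw [Finset.sum_congr rfl fun n _ => Kmid n]
    rw [Finset.sum_ite_eq' (Finset.Icc (-(N : ℤ)) (N : ℤ)) 0 (fun _ => (1 : ℂ))]
    rw [if_pos]
    simp only [Finset.mem_Icc]
    constructor <;> [exact neg_nonpos.2 (Int.ofNat_nonneg N); exact Int.ofNat_nonneg N]
  have Ksum : Tendsto (fun N : ℕ => ∑ n ∈ Finset.Icc (-(N : ℤ)) (N : ℤ), K n) atTop (𝓝 1) := by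
    have h0 := (Kleft.add Kright).congr (fun N => rfl)
    have hcomb : Tendsto (fun N : ℕ =>
        (∑ n ∈ Finset.Icc (-(N : ℤ)) (N : ℤ), ∫ t in α..((m : ℝ) - 1 / 2), ee (-(n : ℂ) * t))
        + 1
        + ∑ n ∈ Finset.Icc (-(N : ℤ)) (N : ℤ), ∫ t in ((m : ℝ) + 1 / 2)..β, ee (-(n : ℂ) * t))
        atTop (𝓝 (0 + 1 + 0)) := (Kleft.add tendsto_const_nhds).add Kright
    rw [zero_add, add_zero] at hcomb
    refine hcomb.congr fun N => ?_
    rw [← Kmidsum N, ← Finset.sum_add_distrib, ← Finset.sum_add_distrib]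
    exact Finset.sum_congr rfl fun n _ => (Ksplit n).symm
  -- conclusion
  have lim1 : Tendsto (fun N : ℕ => c ((N : ℤ) + 1)) atTop (𝓝 0) :=
    rl_seq α β h (fun N => (N : ℤ) + 1) tendsto_coe_succ
  have lim2 : Tendsto (fun N : ℕ => c (-(N : ℤ))) atTop (𝓝 0) :=
    rl_seq α β h (fun N => -(N : ℤ)) tendsto_coe_neg
  have final : Tendsto (fun N : ℕ => g (m : ℝ) * (∑ n ∈ Finset.Icc (-(N : ℤ)) (N : ℤ), K n)
      + (c ((N : ℤ) + 1) - c (-(N : ℤ)))) atTop (𝓝 (g (m : ℝ) * 1 + (0 - 0))) :=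
    (Ksum.const_mul _).add (lim1.sub lim2)
  rw [mul_one, sub_zero, add_zero] at final
  refine final.congr fun N => ?_
  rw [← telescope c N, Finset.mul_sum, ← Finset.sum_add_distrib]
  exact (Finset.sum_congr rfl fun n _ => (key n)).symm

lemma core : ∀ (d : ℕ) (α β : ℝ) (g : ℝ → ℂ), α < β → (∀ j : ℤ, α ≠ (j : ℝ)) →
    (∀ j : ℤ, β ≠ (j : ℝ)) → ContDiffOn ℝ 1 g (Set.Icc α β) → ⌊β⌋ - ⌊α⌋ = (d : ℤ) →
    Tendsto (fun N : ℕ => ∑ n ∈ Finset.Icc (-(N : ℤ)) (N : ℤ),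
      ∫ t in α..β, g t * ee (-(n : ℂ) * t)) atTop
      (𝓝 (∑ m ∈ Finset.Ioc ⌊α⌋ ⌊β⌋, g (m : ℝ))) := by
  intro d
  induction d with
  | zero =>
    intro α β g hαβ hα hβ hg hd
    have hfl : ⌊α⌋ = ⌊β⌋ := by omega
    rw [← hfl, Finset.Ioc_self, Finset.sum_empty]
    refine zero_int α β g (by rw [Set.uIcc_of_le hαβ.le]; exact hg.continuousOn) ?_
    intro t ht
    rw [Set.uIcc_of_le hαβ.le] at ht
    have hb1 : (⌊α⌋ : ℝ) < t := by
      have := lt_of_le_of_ne (Int.floor_le α) (Ne.symm (hα ⌊α⌋))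
      linarith [ht.1]
    have hb2 : t < (⌊α⌋ : ℝ) + 1 := by
      have h1 : β < (⌊β⌋ : ℝ) + 1 := Int.lt_floor_add_one β
      rw [hfl]
      linarith [ht.2, hfl ▸ h1]
    exact ee_ne_one_of_Ioo ⌊α⌋ hb1 hb2
  | succ d ih =>
    intro α β g hαβ hα hβ hg hd
    set m : ℤ := ⌊α⌋ + 1 with hm
    have hαfl : (⌊α⌋ : ℝ) < α := lt_of_le_of_ne (Int.floor_le α) (Ne.symm (hα ⌊α⌋))
    have hαm : α < (m : ℝ) := by
      rw [hm]
      push_cast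
      linarith [Int.lt_floor_add_one α]
    have hmβ : (m : ℝ) < β := by
      have h1 : (m : ℝ) ≤ (⌊β⌋ : ℝ) := by exact_mod_cast (by omega : m ≤ ⌊β⌋)
      have h2 : (⌊β⌋ : ℝ) ≤ β := Int.floor_le β
      rcases eq_or_lt_of_le h2 with h | h
      · exact absurd h.symm (hβ ⌊β⌋)
      · linarith
    set γ : ℝ := min ((m : ℝ) + 1 / 2) (((m : ℝ) + β) / 2) with hγ
    have hγ1 : (m : ℝ) < γ := lt_min (by linarith) (by linarith)
    have hγ2 : γ < β := min_lt_of_right_lt (by linarith)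
    have hγ3 : γ ≤ (m : ℝ) + 1 / 2 := min_le_left _ _
    have hγfl : ⌊γ⌋ = m := by
      rw [Int.floor_eq_iff]
      constructor
      · linarith
      · linarith
    have hγint : ∀ j : ℤ, γ ≠ (j : ℝ) := by
      intro j hj
      rw [hj] at hγ1 hγ3
      have b1 : m < j := by exact_mod_cast hγ1
      have b2 : (j : ℝ) < (m : ℝ) + 1 := by linarith
      have b2' : j < m + 1 := by exact_mod_cast (by push_cast at b2 ⊢; linarith : (j : ℝ) < ((m + 1 : ℤ) : ℝ))
      omega
    have hint : ∀ (n : ℤ) (x y : ℝ), x ∈ Set.Icc α β → y ∈ Set.Icc α β →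
        IntervalIntegrable (fun t => g t * ee (-(n : ℂ) * t)) volume x y := by
      intro n x y hx hy
      refine ContinuousOn.intervalIntegrable ?_
      refine ContinuousOn.mono (hg.continuousOn.mul (ee_cont (-(n : ℂ))).continuousOn) ?_
      intro t ht
      rcases Set.mem_uIcc.1 ht with ⟨h1, h2⟩ | ⟨h1, h2⟩
      · exact ⟨le_trans hx.1 h1, le_trans h2 hy.2⟩
      · exact ⟨le_trans hy.1 h1, le_trans h2 hx.2⟩
    have hsplit : ∀ n : ℤ, (∫ t in α..β, g t * ee (-(n : ℂ) * t))
        = (∫ t in α..γ, g t * ee (-(n : ℂ) * t)) + ∫ t in γ..β, g t * ee (-(n : ℂ) * t) := by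
      intro n
      rw [intervalIntegral.integral_add_adjacent_intervals
        (hint n α γ ⟨le_rfl, hαβ.le⟩ ⟨(lt_trans hαm hγ1).le, hγ2.le⟩)
        (hint n γ β ⟨(lt_trans hαm hγ1).le, hγ2.le⟩ ⟨hαβ.le, le_rfl⟩)]
    have hone : Tendsto (fun N : ℕ => ∑ n ∈ Finset.Icc (-(N : ℤ)) (N : ℤ),
        ∫ t in α..γ, g t * ee (-(n : ℂ) * t)) atTop (𝓝 (g (m : ℝ))) := by
      refine one_int α γ m ?_ hαm hγ1 (by linarith) g (hg.mono ?_)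
      · rw [hm]
        push_cast
        linarith
      · exact Set.Icc_subset_Icc le_rfl hγ2.le
    have hrest : Tendsto (fun N : ℕ => ∑ n ∈ Finset.Icc (-(N : ℤ)) (N : ℤ),
        ∫ t in γ..β, g t * ee (-(n : ℂ) * t)) atTop
        (𝓝 (∑ j ∈ Finset.Ioc ⌊γ⌋ ⌊β⌋, g (j : ℝ))) := by
      refine ih γ β g hγ2 hγint hβ (hg.mono (Set.Icc_subset_Icc (lt_trans hαm hγ1).le le_rfl)) ?_
      rw [hγfl]
      omega
    have hsum : (∑ j ∈ Finset.Ioc ⌊α⌋ ⌊β⌋, g (j : ℝ))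
        = g (m : ℝ) + ∑ j ∈ Finset.Ioc ⌊γ⌋ ⌊β⌋, g (j : ℝ) := by
      rw [hγfl]
      have h1 : Finset.Ioc ⌊α⌋ m = {m} := by
        ext j
        simp only [Finset.mem_Ioc, Finset.mem_singleton]
        omega
      have hdisj : Disjoint (Finset.Ioc ⌊α⌋ m) (Finset.Ioc m ⌊β⌋) := by
        rw [Finset.disjoint_left]
        intro j hj1 hj2
        simp only [Finset.mem_Ioc] at hj1 hj2
        omega
      rw [← Finset.Ioc_union_Ioc_eq_Ioc (by omega : ⌊α⌋ ≤ m) (by omega : m ≤ ⌊β⌋),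
        Finset.sum_union hdisj, h1, Finset.sum_singleton]
    rw [hsum]
    refine (hone.add hrest).congr fun N => ?_
    rw [← Finset.sum_add_distrib]
    exact Finset.sum_congr rfl fun n _ => (hsplit n).symm

/-- Poisson analogue for a periodic weight (Theorem 2(I)). -/
theorem poisson_periodic_weight
    (k : ℕ) (hk : 1 ≤ k) (χ : ℤ → ℂ) (hχ : ∀ n : ℤ, χ (n + (k : ℤ)) = χ n)
    (a b : ℝ) (hab : a < b)
    (ha : ∀ n : ℤ, a ≠ (n : ℝ)) (hb : ∀ n : ℤ, b ≠ (n : ℝ))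
    (f : ℝ → ℂ) (hf : ContDiffOn ℝ 1 f (Set.Icc a b)) :
    Tendsto
      (fun N : ℕ => (1 / (k : ℂ)) * ∑ n ∈ Finset.Icc (-(N : ℤ)) (N : ℤ),
        tauSum k χ n * ∫ u in a..b, f u * ee (-(n : ℂ) * (u : ℂ) / (k : ℂ)))
      atTop (nhds (∑ n ∈ Finset.Ioc ⌊a⌋ ⌊b⌋, χ n * f (n : ℝ))) := by
  have hk0 : (0 : ℝ) < (k : ℝ) := by exact_mod_cast Nat.pos_of_ne_zero (by omega)
  have hkR : (k : ℝ) ≠ 0 := ne_of_gt hk0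
  have hkC : (k : ℂ) ≠ 0 := by exact_mod_cast (by exact_mod_cast hkR : ((k : ℝ) : ℂ) ≠ 0)
  set A : ℤ → ℝ := fun l => (a - l) / k with hA
  set B : ℤ → ℝ := fun l => (b - l) / k with hB
  set G : ℤ → ℝ → ℂ := fun l t => f ((k : ℝ) * t + l) with hG
  -- period of χ in both directions
  have chi_per : ∀ l j : ℤ, χ (l + k * j) = χ l := by
    intro l j
    induction j using Int.induction_on with
    | zero => simp
    | succ i ih =>
      have : l + (k : ℤ) * (i + 1) = (l + k * i) + k := by ring
      rw [this, hχ, ih]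
    | pred i ih =>
      have : l + (k : ℤ) * (-i - 1) + k = l + k * (-i) := by ring
      have h2 := hχ (l + (k : ℤ) * (-i - 1))
      rw [this] at h2
      rw [← h2]
      exact ih
  -- the key change-of-variables identity
  have hkey : ∀ (n l : ℤ), ee ((n : ℂ) * (l : ℂ) / (k : ℂ))
        * (∫ u in a..b, f u * ee (-(n : ℂ) * (u : ℂ) / (k : ℂ)))
      = (k : ℂ) * ∫ t in A l..B l, G l t * ee (-(n : ℂ) * t) := by
    intro n l
    set F : ℝ → ℂ := fun u => f u * ee (-(n : ℂ) * (u : ℂ) / (k : ℂ)) with hF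
    have hsub : (∫ x in A l..B l, F ((k : ℝ) * x + (l : ℝ)))
        = (k : ℝ)⁻¹ • ∫ x in ((k : ℝ) * A l + l)..((k : ℝ) * B l + l), F x :=
      intervalIntegral.integral_comp_mul_add F hkR (l : ℝ)
    have ha' : (k : ℝ) * A l + l = a := by rw [hA]; field_simp; ring
    have hb' : (k : ℝ) * B l + l = b := by rw [hB]; field_simp; ring
    rw [ha', hb'] at hsub
    have hpt : ∀ t : ℝ, G l t * ee (-(n : ℂ) * t)
        = ee ((n : ℂ) * (l : ℂ) / (k : ℂ)) * F ((k : ℝ) * t + (l : ℝ)) := by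
      intro t
      rw [hG, hF]
      simp only
      have e1 : (-(n : ℂ) * ((((k : ℝ) * t + (l : ℝ)) : ℝ) : ℂ) / (k : ℂ))
          = (-(n : ℂ) * t) + (-(n : ℂ) * l / k) := by
        push_cast
        field_simp
        ring
      rw [e1, ee_add]
      have e2 : ee ((n : ℂ) * (l : ℂ) / (k : ℂ)) * ee (-(n : ℂ) * (l : ℂ) / (k : ℂ)) = 1 := by
        rw [← ee_add, show ((n : ℂ) * (l : ℂ) / (k : ℂ)) + (-(n : ℂ) * (l : ℂ) / (k : ℂ)) = 0 by ring,
          ee_zero]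
      calc f ((k : ℝ) * t + (l : ℝ)) * ee (-(n : ℂ) * t)
          = (ee ((n : ℂ) * l / k) * ee (-(n : ℂ) * l / k)) * (f ((k : ℝ) * t + (l : ℝ)) * ee (-(n : ℂ) * t)) := by
            rw [e2, one_mul]
        _ = ee ((n : ℂ) * l / k) * (f ((k : ℝ) * t + (l : ℝ)) * (ee (-(n : ℂ) * t) * ee (-(n : ℂ) * l / k))) := by
            ring
    rw [intervalIntegral.integral_congr (fun t _ => hpt t), intervalIntegral.integral_const_mul,
      hsub]
    rw [Complex.real_smul]
    push_cast
    field_simp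
  -- termwise rearrangement
  have hterm : ∀ N : ℕ, (1 / (k : ℂ)) * ∑ n ∈ Finset.Icc (-(N : ℤ)) (N : ℤ),
        tauSum k χ n * ∫ u in a..b, f u * ee (-(n : ℂ) * (u : ℂ) / (k : ℂ))
      = ∑ l ∈ Finset.Icc (1 : ℤ) (k : ℤ), χ l * ∑ n ∈ Finset.Icc (-(N : ℤ)) (N : ℤ),
          ∫ t in A l..B l, G l t * ee (-(n : ℂ) * t) := by
    intro N
    simp only [tauSum, Finset.sum_mul, Finset.mul_sum]
    rw [Finset.sum_comm]
    refine Finset.sum_congr rfl fun l _ => ?_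
    refine Finset.sum_congr rfl fun n _ => ?_
    have h1 := hkey n l
    have h2 : (∫ t in A l..B l, G l t * ee (-(n : ℂ) * t))
        = 1 / (k : ℂ) * (ee ((n : ℂ) * (l : ℂ) / (k : ℂ))
          * ∫ u in a..b, f u * ee (-(n : ℂ) * (u : ℂ) / (k : ℂ))) := by
      rw [h1]
      field_simp
    rw [h2]
    ring
  -- limits per l
  have hAB : ∀ l : ℤ, A l < B l := fun l => by
    rw [hA, hB]
    exact (div_lt_div_iff_of_pos_right hk0).2 (by linarith)
  have hAint : ∀ l j : ℤ, A l ≠ (j : ℝ) := by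
    intro l j hj
    apply ha ((k : ℤ) * j + l)
    rw [hA] at hj
    field_simp at hj
    push_cast
    linarith
  have hBint : ∀ l j : ℤ, B l ≠ (j : ℝ) := by
    intro l j hj
    apply hb ((k : ℤ) * j + l)
    rw [hB] at hj
    field_simp at hj
    push_cast
    linarith
  have hGcd : ∀ l : ℤ, ContDiffOn ℝ 1 (G l) (Set.Icc (A l) (B l)) := by
    intro l
    rw [hG]
    refine ContDiffOn.comp (t := Set.Icc a b) hf
      ((contDiff_const.mul contDiff_id).add contDiff_const).contDiffOn ?_
    intro t ht
    simp only [Set.mem_Icc] at ht ⊢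
    have h1 := (div_le_iff₀ hk0).1 ht.1
    have h2 := (le_div_iff₀ hk0).1 ht.2
    constructor
    · linarith
    · linarith
  have hTend : ∀ l : ℤ, Tendsto (fun N : ℕ => ∑ n ∈ Finset.Icc (-(N : ℤ)) (N : ℤ),
      ∫ t in A l..B l, G l t * ee (-(n : ℂ) * t)) atTop
      (𝓝 (∑ m ∈ Finset.Ioc ⌊A l⌋ ⌊B l⌋, G l (m : ℝ))) := by
    intro l
    refine core (⌊B l⌋ - ⌊A l⌋).toNat (A l) (B l) (G l) (hAB l) (hAint l) (hBint l) (hGcd l) ?_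
    rw [Int.toNat_of_nonneg (sub_nonneg.2 (Int.floor_le_floor (hAB l).le))]
  have main : Tendsto (fun N : ℕ => ∑ l ∈ Finset.Icc (1 : ℤ) (k : ℤ),
      χ l * ∑ n ∈ Finset.Icc (-(N : ℤ)) (N : ℤ), ∫ t in A l..B l, G l t * ee (-(n : ℂ) * t))
      atTop (𝓝 (∑ l ∈ Finset.Icc (1 : ℤ) (k : ℤ),
        χ l * ∑ m ∈ Finset.Ioc ⌊A l⌋ ⌊B l⌋, G l (m : ℝ))) :=
    tendsto_finset_sum _ fun l _ => (hTend l).const_mul (χ l)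
  have hmem : ∀ l m : ℤ, (m ∈ Finset.Ioc ⌊A l⌋ ⌊B l⌋) ↔ ((k : ℤ) * m + l ∈ Finset.Ioc ⌊a⌋ ⌊b⌋) := by
    intro l m
    simp only [Finset.mem_Ioc, Int.floor_lt, Int.le_floor]
    rw [hA, hB]
    constructor
    · rintro ⟨h1, h2⟩
      have h1' := (div_lt_iff₀ hk0).1 h1
      have h2' := (le_div_iff₀ hk0).1 h2
      constructor
      · push_cast
        linarith
      · push_cast
        linarith
    · rintro ⟨h1, h2⟩
      push_cast at h1 h2
      constructor
      · rw [div_lt_iff₀ hk0]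
        linarith
      · rw [le_div_iff₀ hk0]
        linarith
  have hfinal : (∑ l ∈ Finset.Icc (1 : ℤ) (k : ℤ),
        χ l * ∑ m ∈ Finset.Ioc ⌊A l⌋ ⌊B l⌋, G l (m : ℝ))
      = ∑ n ∈ Finset.Ioc ⌊a⌋ ⌊b⌋, χ n * f (n : ℝ) := by
    have step1 : (∑ l ∈ Finset.Icc (1 : ℤ) (k : ℤ),
          χ l * ∑ m ∈ Finset.Ioc ⌊A l⌋ ⌊B l⌋, G l (m : ℝ))
        = ∑ l ∈ Finset.Icc (1 : ℤ) (k : ℤ), ∑ m ∈ Finset.Ioc ⌊A l⌋ ⌊B l⌋,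
            χ ((k : ℤ) * m + l) * f ((((k : ℤ) * m + l : ℤ)) : ℝ) := by
      refine Finset.sum_congr rfl fun l _ => ?_
      rw [Finset.mul_sum]
      refine Finset.sum_congr rfl fun m _ => ?_
      congr 1
      · rw [show (k : ℤ) * m + l = l + (k : ℤ) * m by ring, chi_per l m]
      · rw [hG]
        simp only
        congr 1
        push_cast
        ring
    rw [step1, Finset.sum_sigma' (Finset.Icc (1 : ℤ) (k : ℤ))
      (fun l => Finset.Ioc ⌊A l⌋ ⌊B l⌋)
      (fun l m => χ ((k : ℤ) * m + l) * f ((((k : ℤ) * m + l : ℤ)) : ℝ))]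
    refine Finset.sum_nbij' (fun p => (k : ℤ) * p.2 + p.1)
      (fun n => ⟨(n - 1) % k + 1, (n - 1) / k⟩) ?_ ?_ ?_ ?_ ?_
    · intro p hp
      rw [Finset.mem_sigma] at hp
      exact (hmem p.1 p.2).1 hp.2
    · intro n hn
      rw [Finset.mem_sigma]
      have hk' : (0 : ℤ) < (k : ℤ) := by exact_mod_cast Nat.pos_of_ne_zero (by omega)
      have hmod1 : 0 ≤ (n - 1) % k := Int.emod_nonneg _ (by omega)
      have hmod2 : (n - 1) % k < k := Int.emod_lt_of_pos _ hk'
      have hdm := Int.mul_ediv_add_emod (n - 1) (k : ℤ)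
      have hn' : (k : ℤ) * ((n - 1) / k) + ((n - 1) % k + 1) = n := by linarith
      constructor
      · simp only [Finset.mem_Icc]
        omega
      · refine (hmem _ _).2 ?_
        rw [hn']
        exact hn
    · intro p hp
      rw [Finset.mem_sigma, Finset.mem_Icc] at hp
      obtain ⟨⟨hl1, hl2⟩, _⟩ := hp
      have hk' : (0 : ℤ) < (k : ℤ) := by exact_mod_cast Nat.pos_of_ne_zero (by omega)
      have e0 : (k : ℤ) * p.2 + p.1 - 1 = (p.1 - 1) + (k : ℤ) * p.2 := by ring
      have e1 : ((k : ℤ) * p.2 + p.1 - 1) % k = p.1 - 1 := by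
        rw [e0, Int.add_mul_emod_self_left, Int.emod_eq_of_lt (by omega) (by omega)]
      have e2 : ((k : ℤ) * p.2 + p.1 - 1) / k = p.2 := by
        rw [e0, Int.add_mul_ediv_left _ _ (by omega : (k : ℤ) ≠ 0),
          Int.ediv_eq_zero_of_lt (by omega) (by omega), zero_add]
      simp only [e1, e2, sub_add_cancel]
    · intro n hn
      have hdm := Int.mul_ediv_add_emod (n - 1) (k : ℤ)
      simp only
      linarith
    · intro p hp
      rfl
  rw [← hfinal]
  exact main.congr fun N => (hterm N).symm
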